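/- arXiv:1403.3844 — 3 statements merged into one kernel-verified Lean document; each statement's English description precedes it below -/
import Mathlib

section
/- Let w_1 ≥ w_2 ≥ ... ≥ w_n > 0 be integers, let 1 ≤ k ≤ t < n, let m_k, ..., m_t be positive integers, and let ν_k, ..., ν_t be pairwise distinct indices in {1, ..., n}. Suppose m_k w_k + m_{k+1} w_{k+1} + ... + m_t w_t + w_{ν_k} + ... + w_{ν_t} + k ≤ w_k + w_{k+1} + ... + w_{t+1}. Then m_k = m_{k+1} = ... = m_t = 1, w_{t+1} ≥ w_{ν_k} + ... + w_{ν_t} + k, and each ν_j ≥ t + 2. -/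
open Finset

/-- Arithmetic core of Proposition 14: with decreasing positive weights `w_1 ≥ … ≥ w_n > 0`,
`1 ≤ k ≤ t < n`, positive integers `m_k,…,m_t` and pairwise distinct indices
`ν_k,…,ν_t ∈ {1,…,n}`, the inequality
`Σ_{j=k}^t m_j w_j + Σ_{j=k}^t w_{ν_j} + k ≤ Σ_{j=k}^{t+1} w_j`
forces all `m_j = 1`, `w_{t+1} ≥ Σ_j w_{ν_j} + k`, and each `ν_j ≥ t + 2`. -/
theorem stmt_4 (n t k : ℕ) (hk : 1 ≤ k) (hkt : k ≤ t) (htn : t < n)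
    (w : ℕ → ℤ) (hw_anti : ∀ i j : ℕ, 1 ≤ i → i ≤ j → j ≤ n → w j ≤ w i)
    (hw_pos : ∀ i : ℕ, 1 ≤ i → i ≤ n → 0 < w i)
    (m : ℕ → ℤ) (hm : ∀ j ∈ Icc k t, 1 ≤ m j)
    (ν : ℕ → ℕ) (hν_range : ∀ j ∈ Icc k t, 1 ≤ ν j ∧ ν j ≤ n)
    (hν_inj : ∀ i ∈ Icc k t, ∀ j ∈ Icc k t, ν i = ν j → i = j)
    (hineq : (∑ j ∈ Icc k t, m j * w j) + (∑ j ∈ Icc k t, w (ν j)) + (k : ℤ)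
      ≤ ∑ j ∈ Icc k (t + 1), w j) :
    (∀ j ∈ Icc k t, m j = 1) ∧
    ((∑ j ∈ Icc k t, w (ν j)) + (k : ℤ) ≤ w (t + 1)) ∧
    (∀ j ∈ Icc k t, t + 2 ≤ ν j) := by
  have hsum : ∑ j ∈ Icc k (t+1), w j = (∑ j ∈ Icc k t, w j) + w (t+1) :=
    Finset.sum_Icc_succ_top (by omega) w
  have hkey : (∑ j ∈ Icc k t, (m j - 1) * w j) + (∑ j ∈ Icc k t, w (ν j)) + (k:ℤ)
      ≤ w (t+1) := by
    have hd : ∑ j ∈ Icc k t, (m j - 1) * w j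
        = (∑ j ∈ Icc k t, m j * w j) - ∑ j ∈ Icc k t, w j := by
      rw [← Finset.sum_sub_distrib]
      exact Finset.sum_congr rfl fun j _ => by ring
    linarith
  have hwpos' : ∀ j ∈ Icc k t, 0 < w (ν j) :=
    fun j hj => hw_pos _ (hν_range j hj).1 (hν_range j hj).2
  have hterm_nonneg : ∀ j ∈ Icc k t, 0 ≤ (m j - 1) * w j := by
    intro j hj
    have hmem := Finset.mem_Icc.mp hj
    exact mul_nonneg (by linarith [hm j hj])
      (le_of_lt (hw_pos j (by omega) (by omega)))
  have hνsum_pos : 0 < ∑ j ∈ Icc k t, w (ν j) :=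
    Finset.sum_pos hwpos' ⟨k, by simp [hkt]⟩
  have hk1 : (1:ℤ) ≤ k := by exact_mod_cast hk
  have hm1 : ∀ j ∈ Icc k t, m j = 1 := by
    intro j hj
    by_contra h
    have hj2 : 2 ≤ m j := by have := hm j hj; omega
    have hmem := Finset.mem_Icc.mp hj
    have hwjpos : 0 < w j := hw_pos j (by omega) (by omega)
    have hwj : w (t+1) ≤ w j := hw_anti j (t+1) (by omega) (by omega) (by omega)
    have hsingle : w j ≤ (m j - 1) * w j := by nlinarith
    have hsumge : (m j - 1) * w j ≤ ∑ i ∈ Icc k t, (m i - 1) * w i :=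
      Finset.single_le_sum hterm_nonneg hj
    linarith
  have hms : ∑ j ∈ Icc k t, (m j - 1) * w j = 0 :=
    Finset.sum_eq_zero fun j hj => by rw [hm1 j hj]; ring
  have h2 : (∑ j ∈ Icc k t, w (ν j)) + (k:ℤ) ≤ w (t+1) := by
    rw [hms] at hkey; linarith
  refine ⟨hm1, h2, ?_⟩
  intro j hj
  by_contra h
  have hr := hν_range j hj
  have hwν : w (t+1) ≤ w (ν j) := hw_anti (ν j) (t+1) hr.1 (by omega) (by omega)
  have hsingle : w (ν j) ≤ ∑ i ∈ Icc k t, w (ν i) :=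
    Finset.single_le_sum (fun i hi => le_of_lt (hwpos' i hi)) hj
  linarith
end

section
/- Over a field K of characteristic zero, the polynomials g_1 = x_1 x_4 + x_2 x_5 + x_3^2 − x_4^5 and g_2 = x_1 x_5 + x_2 x_6 + x_3^2 + x_6^5 form a regular sequence in K[x_1, ..., x_6]. -/
set_option maxRecDepth 8000

open MvPolynomial

/-- A linear polynomial `C a * X + C b` with `a` prime and `a ∤ b` is irreducible. -/
lemma irred_linear_aux {R : Type*} [CommRing R] [IsDomain R] {a b : R}
    (ha : Prime a) (hb : ¬ a ∣ b) :
    Irreducible (Polynomial.C a * Polynomial.X + Polynomial.C b) := by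
  set p : Polynomial R := Polynomial.C a * Polynomial.X + Polynomial.C b with hp
  have hdegp : p.natDegree = 1 := Polynomial.natDegree_linear ha.ne_zero
  have hpne : p ≠ 0 := fun h => by simp [h] at hdegp
  have key : ∀ q r : Polynomial R, p = q * r → q.natDegree = 0 → IsUnit q := by
    intro q r hqr hq
    obtain ⟨c, rfl⟩ : ∃ c, q = Polynomial.C c :=
      ⟨q.coeff 0, Polynomial.eq_C_of_natDegree_eq_zero hq⟩
    have hdvd : ∀ i, c ∣ p.coeff i := by
      rw [← Polynomial.C_dvd_iff_dvd_coeff]; exact ⟨r, hqr⟩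
    have hca : c ∣ a := by
      have := hdvd 1
      simpa [hp, Polynomial.coeff_C] using this
    have hcb : c ∣ b := by
      have := hdvd 0
      simpa [hp, Polynomial.coeff_C] using this
    obtain ⟨d, hd⟩ := hca
    rcases ha.irreducible.isUnit_or_isUnit hd with h | h
    · exact Polynomial.isUnit_C.mpr h
    · exfalso
      apply hb
      obtain ⟨u, rfl⟩ := h
      have : a ∣ c := ⟨(u⁻¹ : Rˣ), by rw [hd, mul_assoc, Units.mul_inv, mul_one]⟩
      exact this.trans hcb
  refine ⟨Polynomial.not_isUnit_of_natDegree_pos p (by omega), ?_⟩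
  intro q r hqr
  have hq0 : q ≠ 0 := fun h => hpne (by simp [hqr, h])
  have hr0 : r ≠ 0 := fun h => hpne (by simp [hqr, h])
  have hdeg : q.natDegree + r.natDegree = 1 := by
    rw [← Polynomial.natDegree_mul hq0 hr0, ← hqr, hdegp]
  rcases Nat.eq_zero_or_pos q.natDegree with h | h
  · exact Or.inl (key q r hqr h)
  · exact Or.inr (key r q (by rw [hqr, mul_comm]) (by omega))

/-- Each variable is prime in a multivariate polynomial ring over a field. -/
lemma prime_X_fin_aux {K : Type*} [Field K] {n : ℕ} (j : Fin (n + 1)) :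
    Prime (X j : MvPolynomial (Fin (n + 1)) K) := by
  let e : MvPolynomial (Fin (n + 1)) K ≃ₐ[K] Polynomial (MvPolynomial (Fin n) K) :=
    (renameEquiv K (Equiv.swap j 0)).trans (finSuccEquiv K n)
  have he : e (X j) = Polynomial.X := by
    show finSuccEquiv K n (rename (Equiv.swap j 0) (X j)) = Polynomial.X
    rw [rename_X, Equiv.swap_apply_left, finSuccEquiv_X_zero]
  rw [← MulEquiv.prime_iff e.toRingEquiv.toMulEquiv (p := (X j : MvPolynomial (Fin (n+1)) K))]
  show Prime (e (X j))
  rw [he]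
  exact Polynomial.prime_X

/-- `g₁` is prime. -/
lemma prime_g1_aux (K : Type*) [Field K] [CharZero K] :
    Prime ((X 0 * X 3 + X 1 * X 4 + X 2 ^ 2 - X 3 ^ 5 : MvPolynomial (Fin 6) K)) := by
  set g₁ : MvPolynomial (Fin 6) K := X 0 * X 3 + X 1 * X 4 + X 2 ^ 2 - X 3 ^ 5 with hg₁
  set b : MvPolynomial (Fin 5) K := X 0 * X 3 + X 1 ^ 2 - X 2 ^ 5 with hb
  have hφ : finSuccEquiv K 5 g₁ =
      Polynomial.C (X 2) * Polynomial.X + Polynomial.C b := by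
    have h1 : (1 : Fin 6) = Fin.succ 0 := rfl
    have h2 : (2 : Fin 6) = Fin.succ 1 := rfl
    have h3 : (3 : Fin 6) = Fin.succ 2 := rfl
    have h4 : (4 : Fin 6) = Fin.succ 3 := rfl
    rw [hg₁, hb, h1, h2, h3, h4]
    simp only [map_add, map_sub, map_mul, map_pow, finSuccEquiv_X_zero, finSuccEquiv_X_succ]
    ring
  have hnd : ¬ (X 2 : MvPolynomial (Fin 5) K) ∣ b := by
    intro hdvd
    have := (aeval (![1,0,0,1,1] : Fin 5 → K)).toRingHom.map_dvd hdvd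
    simp [hb] at this
  have hprime : Prime (finSuccEquiv K 5 g₁) := by
    rw [hφ]
    exact (UniqueFactorizationMonoid.irreducible_iff_prime).mp
      (irred_linear_aux (prime_X_fin_aux (2 : Fin 5)) hnd)
  rw [← MulEquiv.prime_iff (finSuccEquiv K 5).toRingEquiv.toMulEquiv (p := g₁)]
  exact hprime

/-- The polynomials `g_1 = x_1x_4 + x_2x_5 + x_3² − x_4⁵` and
`g_2 = x_1x_5 + x_2x_6 + x_3² + x_6⁵` form a regular sequence in `K[x_1,…,x_6]`:
`g_1` is a nonzerodivisor, and `g_2` is a nonzerodivisor modulo `⟨g_1⟩`. -/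
theorem stmt_8 (K : Type*) [Field K] [CharZero K]
    (g₁ g₂ : MvPolynomial (Fin 6) K)
    (hg₁ : g₁ = X 0 * X 3 + X 1 * X 4 + X 2 ^ 2 - X 3 ^ 5)
    (hg₂ : g₂ = X 0 * X 4 + X 1 * X 5 + X 2 ^ 2 + X 5 ^ 5) :
    (∀ h : MvPolynomial (Fin 6) K, g₁ * h = 0 → h = 0) ∧
    (∀ h : MvPolynomial (Fin 6) K, g₂ * h ∈ Ideal.span ({g₁} : Set (MvPolynomial (Fin 6) K))
      → h ∈ Ideal.span ({g₁} : Set (MvPolynomial (Fin 6) K))) := by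
  have hp : Prime g₁ := hg₁ ▸ prime_g1_aux K
  have hnd : ¬ g₁ ∣ g₂ := by
    intro hdvd
    have := (aeval (![0,0,0,0,0,1] : Fin 6 → K)).toRingHom.map_dvd hdvd
    have h5 : ![0,0,0,0,0,(1:K)] 5 = 1 := rfl
    simp [hg₁, hg₂, h5] at this
  constructor
  · intro h hmul
    rcases mul_eq_zero.mp hmul with h0 | h0
    · exact absurd h0 hp.ne_zero
    · exact h0
  · intro h hmem
    rw [Ideal.mem_span_singleton] at hmem ⊢
    exact (hp.2.2 g₂ h hmem).resolve_left hnd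
end

section
/- Let K be a field of characteristic zero with positive integer weights w on x_1, ..., x_n, let g ∈ K[x_1, ..., x_n] be weighted homogeneous containing the monomial x_k^m with m ≥ 2 (with nonzero coefficient, and normalized so that the coefficient of x_k^m is 1/m). Write g = Σ_{j=0}^{m} t_j x_k^{m−j} where each t_j ∈ K[x_1, ..., x̂_k, ..., x_n] (so t_0 = 1/m). Let η = Σ_{i ≥ k} q_i ∂_i be a derivation with each q_i independent of x_k and with η(g) = 0. Then q_k + Σ_{i > k} q_i ∂_i(t_1) = 0, and consequently η = Σ_{i > k} q_i (∂_i − ∂_i(t_1) ∂_k). -/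
open MvPolynomial Finset

private lemma aux_pderiv_eq (K : Type*) [CommSemiring K] {n : ℕ} (i : Fin n)
    (p : MvPolynomial (Fin n) K) :
    pderiv i p = ∑ v ∈ p.support, monomial (v - Finsupp.single i 1) (coeff v p * v i) := by
  conv_lhs => rw [as_sum p]
  rw [map_sum]
  simp [pderiv_monomial]

private lemma aux_pderiv_self (K : Type*) [CommSemiring K] {n : ℕ} {k : Fin n}
    {p : MvPolynomial (Fin n) K} (hp : ∀ d ∈ p.support, d k = 0) :
    pderiv k p = 0 := by
  rw [aux_pderiv_eq]
  apply Finset.sum_eq_zero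
  intro v hv
  simp [hp v hv]

private lemma aux_pderiv_supp (K : Type*) [CommSemiring K] {n : ℕ} {k : Fin n} (i : Fin n)
    {p : MvPolynomial (Fin n) K} (hp : ∀ d ∈ p.support, d k = 0) :
    ∀ d ∈ (pderiv i p).support, d k = 0 := by
  intro d hd
  by_contra hdk
  apply MvPolynomial.mem_support_iff.mp hd
  rw [aux_pderiv_eq, MvPolynomial.coeff_sum]
  apply Finset.sum_eq_zero
  intro v hv
  rw [MvPolynomial.coeff_monomial, if_neg]
  intro h
  apply hdk
  rw [← h]
  simp [Finsupp.tsub_apply, hp v hv]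

private noncomputable def phi (K : Type*) [CommSemiring K] {n : ℕ} (k : Fin n) :
    MvPolynomial (Fin n) K →ₐ[K] Polynomial (MvPolynomial (Fin n) K) :=
  aeval (fun i => if i = k then Polynomial.X else Polynomial.C (X i))

private lemma phi_X_self (K : Type*) [CommSemiring K] {n : ℕ} (k : Fin n) :
    phi K k (X k) = Polynomial.X := by
  rw [phi, aeval_X, if_pos rfl]

private lemma phi_of_indep (K : Type*) [CommSemiring K] {n : ℕ} (k : Fin n)
    {p : MvPolynomial (Fin n) K} (hp : ∀ d ∈ p.support, d k = 0) :
    phi K k p = Polynomial.C p := by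
  conv_lhs => rw [as_sum p]
  conv_rhs => rw [as_sum p]
  rw [map_sum, map_sum]
  apply Finset.sum_congr rfl
  intro v hv
  have hk : v k = 0 := hp v hv
  rw [phi, aeval_monomial, monomial_eq, map_mul, Polynomial.algebraMap_apply,
    MvPolynomial.algebraMap_eq]
  congr 1
  rw [Finsupp.prod, Finsupp.prod, map_prod]
  refine Finset.prod_congr rfl fun i hi => ?_
  have hik : i ≠ k := fun h => Finsupp.mem_support_iff.mp hi (h ▸ hk)
  rw [if_neg hik, map_pow]


/-- Computational heart of Lemma 13: write the weighted homogeneous `g` containing the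
monomial `x_k^m` (with coefficient normalized to `1/m`, `m ≥ 2`) as
`g = Σ_{j=0}^m t_j x_k^{m−j}` with the `t_j` independent of `x_k`.  If
`η = Σ_{i ≥ k} q_i ∂_i` is a derivation with all `q_i` independent of `x_k` and
`η(g) = 0`, then `q_k + Σ_{i > k} q_i ∂_i(t_1) = 0`, and consequently
`η = Σ_{i > k} q_i (∂_i − ∂_i(t_1) ∂_k)`. -/
theorem stmt_13 (K : Type*) [Field K] [CharZero K] (n : ℕ) (k : Fin n)
    (w : Fin n → ℕ) (hw : ∀ i, 0 < w i) (m : ℕ) (hm : 2 ≤ m)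
    (tcoef : ℕ → MvPolynomial (Fin n) K)
    (htk : ∀ j : ℕ, ∀ d ∈ (tcoef j).support, d k = 0)
    (ht0 : tcoef 0 = C ((m : K)⁻¹))
    (g : MvPolynomial (Fin n) K)
    (hgdef : g = ∑ j ∈ range (m + 1), tcoef j * X k ^ (m - j))
    (dg : ℕ) (hg : IsWeightedHomogeneous w g dg)
    (q : Fin n → MvPolynomial (Fin n) K)
    (hqlow : ∀ i : Fin n, i < k → q i = 0)
    (hqk : ∀ i : Fin n, ∀ d ∈ (q i).support, d k = 0)
    (hηg : ∑ i : Fin n, q i * pderiv i g = 0) :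
    (q k + ∑ i ∈ univ.filter (fun i : Fin n => k < i), q i * pderiv i (tcoef 1) = 0) ∧
    (∀ f : MvPolynomial (Fin n) K, ∑ i : Fin n, q i * pderiv i f =
      ∑ i ∈ univ.filter (fun i : Fin n => k < i),
        q i * (pderiv i f - pderiv i (tcoef 1) * pderiv k f)) := by
  classical
  have hmK : (m : K) ≠ 0 := Nat.cast_ne_zero.mpr (by omega)
  have ht1k : pderiv k (tcoef 1) = 0 := aux_pderiv_self K (htk 1)
  -- coefficient of x_k^{m-1} in ∂_i g
  have key : ∀ i : Fin n,
      Polynomial.coeff (phi K k (pderiv i g)) (m - 1)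
        = pderiv i (tcoef 1) + (if i = k then 1 else 0) := by
    intro i
    by_cases hik : i = k
    · subst hik
      have hdg : pderiv i g = ∑ j ∈ range (m + 1),
          tcoef j * (((m - j : ℕ) : MvPolynomial (Fin n) K) * X i ^ (m - j - 1)) := by
        rw [hgdef, map_sum]
        refine Finset.sum_congr rfl fun j hj => ?_
        rw [pderiv_mul, aux_pderiv_self K (htk j), zero_mul, zero_add, pderiv_pow,
          pderiv_X_self, mul_one]
      rw [hdg, map_sum]
      have hterm : ∀ j ∈ range (m + 1),
          phi K i (tcoef j * (((m - j : ℕ) : MvPolynomial (Fin n) K) * X i ^ (m - j - 1)))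
          = Polynomial.C (tcoef j * ((m - j : ℕ) : MvPolynomial (Fin n) K))
              * Polynomial.X ^ (m - j - 1) := by
        intro j hj
        rw [map_mul, map_mul, map_pow, phi_X_self, phi_of_indep K i (htk j),
          map_natCast (phi K i), map_mul Polynomial.C, ← Polynomial.C_eq_natCast]
        rw [map_natCast (Polynomial.C : MvPolynomial (Fin n) K →+* _)]
        ring
      rw [Finset.sum_congr rfl hterm, Polynomial.finset_sum_coeff, if_pos rfl]
      rw [Finset.sum_eq_single_of_mem 0 (Finset.mem_range.mpr (by omega))]
      · rw [Polynomial.coeff_C_mul, Polynomial.coeff_X_pow, if_pos (by omega), mul_one,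
          ht1k, zero_add, ht0, Nat.sub_zero,
          ← map_natCast (C : K →+* MvPolynomial (Fin n) K) m, ← C_mul,
          inv_mul_cancel₀ hmK, C_1]
      · intro j hj hj0
        rw [Polynomial.coeff_C_mul, Polynomial.coeff_X_pow, if_neg, mul_zero]
        rw [Finset.mem_range] at hj
        omega
    · have hdg : pderiv i g = ∑ j ∈ range (m + 1), pderiv i (tcoef j) * X k ^ (m - j) := by
        rw [hgdef, map_sum]
        refine Finset.sum_congr rfl fun j hj => ?_
        rw [pderiv_mul, pderiv_pow, pderiv_X_of_ne (Ne.symm hik), mul_zero, mul_zero, add_zero]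
      rw [hdg, map_sum]
      have : ∀ j ∈ range (m + 1), phi K k (pderiv i (tcoef j) * X k ^ (m - j))
          = Polynomial.C (pderiv i (tcoef j)) * Polynomial.X ^ (m - j) := by
        intro j hj
        rw [map_mul, map_pow, phi_X_self, phi_of_indep K k (aux_pderiv_supp K i (htk j))]
      rw [Finset.sum_congr rfl this, Polynomial.finset_sum_coeff]
      rw [if_neg hik, add_zero]
      rw [Finset.sum_eq_single_of_mem 1 (Finset.mem_range.mpr (by omega))]
      · rw [Polynomial.coeff_C_mul, Polynomial.coeff_X_pow, if_pos rfl, mul_one]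
      · intro j hj hj1
        rw [Polynomial.coeff_C_mul, Polynomial.coeff_X_pow, if_neg, mul_zero]
        rw [Finset.mem_range] at hj
        omega
  -- apply φ and extract the coefficient at m-1 from η(g) = 0
  have H0 := congrArg (fun p => Polynomial.coeff (phi K k p) (m - 1)) hηg
  simp only [map_sum, map_mul, Polynomial.finset_sum_coeff, map_zero,
    Polynomial.coeff_zero] at H0
  have H : ∑ i : Fin n, q i * (pderiv i (tcoef 1) + if i = k then 1 else 0) = 0 := by
    have e : ∀ i ∈ (univ : Finset (Fin n)),
        ((phi K k) (q i) * (phi K k) ((pderiv i) g)).coeff (m - 1)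
        = q i * (pderiv i (tcoef 1) + if i = k then 1 else 0) := by
      intro i _
      rw [phi_of_indep K k (hqk i), Polynomial.coeff_C_mul, key i]
    rw [← Finset.sum_congr rfl e]
    exact H0
  simp only [mul_add, mul_ite, mul_one, mul_zero, Finset.sum_add_distrib,
    Finset.sum_ite_eq' univ k, Finset.mem_univ, if_pos] at H
  -- H : ∑ i, q i * pderiv i (tcoef 1) + q k = 0
  have hrestrict : ∑ i ∈ univ.filter (fun i : Fin n => k < i), q i * pderiv i (tcoef 1)
      = ∑ i : Fin n, q i * pderiv i (tcoef 1) := by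
    apply Finset.sum_subset (Finset.filter_subset _ _)
    intro i _ hi
    rw [Finset.mem_filter] at hi
    push_neg at hi
    rcases lt_or_eq_of_le (hi (Finset.mem_univ i)) with h | h
    · rw [hqlow i h, zero_mul]
    · rw [h, ht1k, mul_zero]
  have part1 : q k + ∑ i ∈ univ.filter (fun i : Fin n => k < i), q i * pderiv i (tcoef 1) = 0 := by
    rw [hrestrict, add_comm]; exact H
  refine ⟨part1, fun f => ?_⟩
  have split : ∑ i : Fin n, q i * pderiv i f
      = (∑ i ∈ univ.filter (fun i : Fin n => k < i), q i * pderiv i f) + q k * pderiv k f := by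
    rw [← Finset.sum_filter_add_sum_filter_not univ (fun i : Fin n => k < i)]
    congr 1
    apply Finset.sum_eq_single_of_mem k (by simp)
    intro i hi hik
    rw [Finset.mem_filter] at hi
    rw [hqlow i (lt_of_le_of_ne (le_of_not_gt hi.2) hik), zero_mul]
  have expand : ∑ i ∈ univ.filter (fun i : Fin n => k < i),
        q i * (pderiv i f - pderiv i (tcoef 1) * pderiv k f)
      = (∑ i ∈ univ.filter (fun i : Fin n => k < i), q i * pderiv i f)
        - (∑ i ∈ univ.filter (fun i : Fin n => k < i), q i * pderiv i (tcoef 1)) * pderiv k f := by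
    have e2 : ∀ i ∈ univ.filter (fun i : Fin n => k < i),
        q i * (pderiv i f - pderiv i (tcoef 1) * pderiv k f)
        = q i * pderiv i f - q i * pderiv i (tcoef 1) * pderiv k f := fun i _ => by ring
    rw [Finset.sum_congr rfl e2, Finset.sum_sub_distrib, Finset.sum_mul]
  have hqkval : q k = -∑ i ∈ univ.filter (fun i : Fin n => k < i), q i * pderiv i (tcoef 1) :=
    eq_neg_of_add_eq_zero_left part1
  rw [split, expand, hqkval]
  ring
end
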